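/- Let K be the stiffness matrix of a spring network in ℝ^d (d = 2 or 3) with nodes x_1,…,x_N, spring constants k_{ij}, and a partition into terminals B and interior nodes I. Let l_{ij} = l_{ji} be real perturbation coefficients with l_{ij} ≥ 0 whenever k_{ij} = 0, and let E be the matrix built from the coefficients l_{ij} by the same stiffness formula. Then there exists ε_0 > 0 such that for all ε, ε' ∈ (0, ε_0): the kernel of (K + εE)_II is contained in the kernel of K_II, and the kernel of (K + εE)_II equals the kernel of (K + ε'E)_II (in particular the kernel of the perturbed interior block is independent of ε). -/

import Mathlib

/-!
For nonnegative symmetric spring constants `c`, the stiffness quadratic form is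
`w ⬝ K w = ½ ∑ c_{ij} s_{ij}(w)²`, where `s_{ij}(w) = n_{ij} · (w_i - w_j)`. Hence an interior
displacement `u` lies in the kernel of `K_II` iff every spring with `c_{ij} ≠ 0` is unstretched by
`(0, u)`: the kernel depends only on the support of `c`. For `c = k + εl` and small `ε > 0` the
constants stay nonnegative (new springs have `l_{ij} ≥ 0`, existing ones `k_{ij} > 0` survive a
small change), and the support is exactly `supp k ∪ supp l`, independent of `ε` and containing
`supp k`.
-/

open scoped BigOperators
open Matrix

noncomputable section

/-- The Moore–Penrose pseudoinverse of a real square matrix, characterized by the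
four Penrose conditions (it exists and is unique for every real matrix). -/
noncomputable def mpinv {n : Type*} [Fintype n] [DecidableEq n]
    (A : Matrix n n ℝ) : Matrix n n ℝ :=
  @dite _
    (∃ X : Matrix n n ℝ,
      A * X * A = A ∧ X * A * X = X ∧ (A * X)ᵀ = A * X ∧ (X * A)ᵀ = X * A)
    (Classical.propDecidable _) (fun h => h.choose) (fun _ => 0)

/-- Euclidean norm of a vector in `Fin d → ℝ`. -/
noncomputable def enorm {d : ℕ} (v : Fin d → ℝ) : ℝ := Real.sqrt (∑ a, v a ^ 2)

/-- Unit vector pointing from `p` towards `q`. -/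
noncomputable def unitDir {d : ℕ} (p q : Fin d → ℝ) : Fin d → ℝ :=
  fun a => (_root_.enorm (q - p))⁻¹ * (q a - p a)

/-- Stiffness matrix of a spring network with node positions `x` and spring
constants `k`: the `d × d` off-diagonal block coupling nodes `i ≠ j` is
`-k i j • n_{ij} n_{ij}ᵀ` and the `i`-th diagonal block is
`∑ j ≠ i, k i j • n_{ij} n_{ij}ᵀ`. -/
noncomputable def stiffness {d : ℕ} {ι : Type*} [Fintype ι] [DecidableEq ι]
    (x : ι → Fin d → ℝ) (k : ι → ι → ℝ) :
    Matrix (ι × Fin d) (ι × Fin d) ℝ :=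
  Matrix.of fun p q =>
    if p.1 = q.1 then
      ∑ j ∈ Finset.univ.filter (fun j => j ≠ p.1),
        k p.1 j * (unitDir (x p.1) (x j) p.2 * unitDir (x p.1) (x j) q.2)
    else
      -(k p.1 q.1 * (unitDir (x p.1) (x q.1) p.2 * unitDir (x p.1) (x q.1) q.2))

/-- `(x, k)` is a spring network: nodes are at distinct positions and the spring
constants are symmetric and nonnegative. -/
def IsSpringNetwork {d : ℕ} {ι : Type*} (x : ι → Fin d → ℝ) (k : ι → ι → ℝ) : Prop :=
  Function.Injective x ∧ (∀ i j, k i j = k j i) ∧ (∀ i j, 0 ≤ k i j)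

/-- The block of a matrix indexed by `(nodes × Fin d)` selected by the node
maps `f` and `g`. -/
def blk {d : ℕ} {ι κ₁ κ₂ : Type*} (K : Matrix (ι × Fin d) (ι × Fin d) ℝ)
    (f : κ₁ → ι) (g : κ₂ → ι) : Matrix (κ₁ × Fin d) (κ₂ × Fin d) ℝ :=
  K.submatrix (Prod.map f id) (Prod.map g id)

/-- Generalized Schur complement `K_BB - K_BI K_II† K_IB` eliminating the
interior nodes `I`. -/
noncomputable def schurResp {d : ℕ} {B I : Type*} [Fintype B] [Fintype I]
    [DecidableEq B] [DecidableEq I]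
    (K : Matrix ((B ⊕ I) × Fin d) ((B ⊕ I) × Fin d) ℝ) :
    Matrix (B × Fin d) (B × Fin d) ℝ :=
  blk K Sum.inl Sum.inl -
    blk K Sum.inl Sum.inr * mpinv (blk K Sum.inr Sum.inr) * blk K Sum.inr Sum.inl

/-- Static response matrix at the terminals `B` of the spring network `(x, k)`
with interior nodes `I`. -/
noncomputable def staticResponse {d : ℕ} {B I : Type*} [Fintype B] [Fintype I]
    [DecidableEq B] [DecidableEq I]
    (x : (B ⊕ I) → Fin d → ℝ) (k : (B ⊕ I) → (B ⊕ I) → ℝ) :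
    Matrix (B × Fin d) (B × Fin d) ℝ :=
  schurResp (stiffness x k)

/-- Balanced system of forces `f` supported at the points `x`: the total force
vanishes and the total torque vanishes (the torque being recorded as the
antisymmetric matrix `x_i ∧ f_i`, which for `d = 2` is equivalent to the scalar
wedge `u ∧ v = u 0 * v 1 - u 1 * v 0` and for `d = 3` to the cross product). -/
def IsBalanced {d : ℕ} {ι : Type*} [Fintype ι]
    (x f : ι → Fin d → ℝ) : Prop :=
  (∀ a, ∑ i, f i a = 0) ∧ ∀ a b, ∑ i, (x i a * f i b - x i b * f i a) = 0

/-- Planar wedge product. -/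
def wedge2 (u v : Fin 2 → ℝ) : ℝ := u 0 * v 1 - u 1 * v 0

/-- Cross product in `ℝ³`. -/
def cross3 (u v : Fin 3 → ℝ) : Fin 3 → ℝ :=
  ![u 1 * v 2 - u 2 * v 1, u 2 * v 0 - u 0 * v 2, u 0 * v 1 - u 1 * v 0]

/-- The `ε`-neighborhood `{y | dist (y, C) ≤ ε}` of a set `C` (for a closed set
`C`, membership is equivalent to being within Euclidean distance `ε` of some
point of `C`). -/
def epsNbhd {d : ℕ} (C : Set (Fin d → ℝ)) (ε : ℝ) : Set (Fin d → ℝ) :=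
  {y | ∃ z ∈ C, _root_.enorm (y - z) ≤ ε}

/-- Combine terminal and interior displacements into a displacement of all
nodes. -/
def glue {d : ℕ} {B I : Type*} (uB : B × Fin d → ℝ) (uI : I × Fin d → ℝ) :
    (B ⊕ I) × Fin d → ℝ :=
  fun p => Sum.elim (fun b => uB (b, p.2)) (fun i => uI (i, p.2)) p.1

/-- The reduced stiffness matrix `K̃` at the nodes `B ⊕ J` of a spring–mass
network with massless interior nodes `L`, obtained by eliminating `L`. -/
noncomputable def dynKtilde {d : ℕ} {B J L : Type*} [Fintype B] [Fintype J] [Fintype L]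
    [DecidableEq B] [DecidableEq J] [DecidableEq L]
    (x : ((B ⊕ J) ⊕ L) → Fin d → ℝ) (k : ((B ⊕ J) ⊕ L) → ((B ⊕ J) ⊕ L) → ℝ) :
    Matrix ((B ⊕ J) × Fin d) ((B ⊕ J) × Fin d) ℝ :=
  schurResp (stiffness x k)

/-- The diagonal mass matrix `M_JJ` of the interior nodes with mass. -/
noncomputable def massJJ {d : ℕ} {B J L : Type*} [Fintype J] [DecidableEq J]
    (m : (B ⊕ J) ⊕ L → ℝ) : Matrix (J × Fin d) (J × Fin d) ℝ :=
  Matrix.diagonal fun p => m (Sum.inl (Sum.inr p.1))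

/-- The diagonal mass matrix `M_BB` of the terminal nodes. -/
noncomputable def massBB {d : ℕ} {B J L : Type*} [Fintype B] [DecidableEq B]
    (m : (B ⊕ J) ⊕ L → ℝ) : Matrix (B × Fin d) (B × Fin d) ℝ :=
  Matrix.diagonal fun p => m (Sum.inl (Sum.inl p.1))

/-- Dynamic response function
`W(ω) = K̃_BB - ω² M_BB - K̃_BJ (K̃_JJ - ω² M_JJ)⁻¹ K̃_JB` of a spring–mass
network with terminals `B`, interior nodes `J` carrying the masses `m` and
massless interior nodes `L`. -/
noncomputable def dynResponse {d : ℕ} {B J L : Type*} [Fintype B] [Fintype J] [Fintype L]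
    [DecidableEq B] [DecidableEq J] [DecidableEq L]
    (x : ((B ⊕ J) ⊕ L) → Fin d → ℝ) (k : ((B ⊕ J) ⊕ L) → ((B ⊕ J) ⊕ L) → ℝ)
    (m : (B ⊕ J) ⊕ L → ℝ) (ω : ℝ) : Matrix (B × Fin d) (B × Fin d) ℝ :=
  blk (dynKtilde x k) Sum.inl Sum.inl - ω ^ 2 • massBB m -
    blk (dynKtilde x k) Sum.inl Sum.inr *
      (blk (dynKtilde x k) Sum.inr Sum.inr - ω ^ 2 • massJJ m)⁻¹ *
      blk (dynKtilde x k) Sum.inr Sum.inl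

open Filter Topology

section Springs

variable {d : ℕ} {ι : Type*}

theorem unitDir_self (p : Fin d → ℝ) : unitDir p p = 0 := by
  ext a
  simp [unitDir]

theorem unitDir_swap (p q : Fin d → ℝ) : unitDir q p = -unitDir p q := by
  have hnorm : _root_.enorm (p - q) = _root_.enorm (q - p) := by
    simp only [_root_.enorm, Pi.sub_apply]
    congr 1
    exact Finset.sum_congr rfl fun a _ => by ring
  ext a
  simp only [unitDir, hnorm, Pi.neg_apply]
  ring

/-- Linearized change in length of the spring between `i` and `j` under the displacement `w`
(up to sign). -/
def bondStrain (x : ι → Fin d → ℝ) (w : ι × Fin d → ℝ) (i j : ι) : ℝ :=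
  ∑ a, unitDir (x i) (x j) a * (w (i, a) - w (j, a))

theorem bondStrain_swap (x : ι → Fin d → ℝ) (w : ι × Fin d → ℝ) (i j : ι) :
    bondStrain x w j i = bondStrain x w i j :=
  Finset.sum_congr rfl fun a _ => by rw [unitDir_swap, Pi.neg_apply]; ring

variable [Fintype ι] [DecidableEq ι]

theorem stiffness_add (x : ι → Fin d → ℝ) (k l : ι → ι → ℝ) :
    stiffness x (k + l) = stiffness x k + stiffness x l := by
  ext ⟨i, a⟩ ⟨j, b⟩
  simp only [stiffness, Matrix.add_apply, Matrix.of_apply, Pi.add_apply]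
  split_ifs
  · rw [← Finset.sum_add_distrib]
    exact Finset.sum_congr rfl fun _ _ => by ring
  · ring

theorem stiffness_smul (x : ι → Fin d → ℝ) (ε : ℝ) (k : ι → ι → ℝ) :
    stiffness x (ε • k) = ε • stiffness x k := by
  ext ⟨i, a⟩ ⟨j, b⟩
  simp only [stiffness, Matrix.smul_apply, Matrix.of_apply, Pi.smul_apply, smul_eq_mul]
  split_ifs
  · rw [Finset.mul_sum]
    exact Finset.sum_congr rfl fun _ _ => by ring
  · ring

-- Because `n_{ii} = 0`, the diagonal block may sum over all nodes and the off-diagonal formula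
-- may be subtracted everywhere.
theorem stiffness_apply (x : ι → Fin d → ℝ) (c : ι → ι → ℝ) (i j : ι) (a b : Fin d) :
    stiffness x c (i, a) (j, b) =
      (if i = j then ∑ j', c i j' * (unitDir (x i) (x j') a * unitDir (x i) (x j') b) else 0) -
        c i j * (unitDir (x i) (x j) a * unitDir (x i) (x j) b) := by
  simp only [stiffness, Matrix.of_apply]
  split_ifs with hij
  · subst hij
    rw [Finset.sum_filter, unitDir_self]
    simp only [Pi.zero_apply, mul_zero, sub_zero]
    refine Finset.sum_congr rfl fun j _ => ?_
    split_ifs with hj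
    · rfl
    · simp [of_not_not hj, unitDir_self]
  · ring

theorem stiffness_mulVec_apply (x : ι → Fin d → ℝ) (c : ι → ι → ℝ) (w : ι × Fin d → ℝ)
    (i : ι) (a : Fin d) :
    (stiffness x c *ᵥ w) (i, a) = ∑ j, c i j * unitDir (x i) (x j) a * bondStrain x w i j := by
  simp only [mulVec, dotProduct, Fintype.sum_prod_type, stiffness_apply, sub_mul, ite_mul,
    zero_mul, Finset.sum_sub_distrib]
  rw [Finset.sum_comm (f := fun j b => if i = j then _ else 0)]
  simp only [Finset.sum_ite_eq, Finset.mem_univ, if_true, bondStrain, mul_sub, Finset.mul_sum,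
    Finset.sum_sub_distrib, Finset.sum_mul]
  rw [Finset.sum_comm (γ := Fin d)]
  congr 1 <;> exact Finset.sum_congr rfl fun _ _ => Finset.sum_congr rfl fun _ _ => by ring

theorem two_mul_dotProduct_stiffness_mulVec (x : ι → Fin d → ℝ) (c : ι → ι → ℝ)
    (hc : ∀ i j, c i j = c j i) (w : ι × Fin d → ℝ) :
    2 * (w ⬝ᵥ stiffness x c *ᵥ w) = ∑ i, ∑ j, c i j * bondStrain x w i j ^ 2 := by
  set t : ι → ι → ℝ := fun i j => ∑ a, unitDir (x i) (x j) a * w (i, a)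
  have hsplit : ∀ i j, bondStrain x w i j = t i j + t j i := fun i j => by
    simp only [bondStrain, t, unitDir_swap (x j) (x i), Pi.neg_apply, ← Finset.sum_add_distrib]
    exact Finset.sum_congr rfl fun a _ => by ring
  have hform : w ⬝ᵥ stiffness x c *ᵥ w = ∑ i, ∑ j, c i j * t i j * bondStrain x w i j := by
    simp only [dotProduct, Fintype.sum_prod_type, stiffness_mulVec_apply, Finset.mul_sum,
      t, Finset.sum_mul]
    refine Finset.sum_congr rfl fun i _ => ?_
    rw [Finset.sum_comm]
    exact Finset.sum_congr rfl fun j _ => Finset.sum_congr rfl fun a _ => by ring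
  have hswap : ∑ i, ∑ j, c i j * t i j * bondStrain x w i j
      = ∑ i, ∑ j, c i j * t j i * bondStrain x w i j := by
    rw [Finset.sum_comm]
    simp only [hc, bondStrain_swap]
  calc 2 * (w ⬝ᵥ stiffness x c *ᵥ w)
      = ∑ i, ∑ j, (c i j * t i j * bondStrain x w i j + c i j * t j i * bondStrain x w i j) := by
        simp only [Finset.sum_add_distrib, ← hswap, hform]
        ring
    _ = ∑ i, ∑ j, c i j * bondStrain x w i j ^ 2 := by
        simp only [hsplit]
        exact Finset.sum_congr rfl fun i _ => Finset.sum_congr rfl fun j _ => by ring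

end Springs

section Blocks

variable {d : ℕ} {B I : Type*} [Fintype B] [Fintype I]

theorem blk_inr_mulVec_apply (M : Matrix ((B ⊕ I) × Fin d) ((B ⊕ I) × Fin d) ℝ)
    (u : I × Fin d → ℝ) (i : I) (a : Fin d) :
    (blk M Sum.inr Sum.inr *ᵥ u) (i, a) = (M *ᵥ glue (0 : B × Fin d → ℝ) u) (Sum.inr i, a) := by
  simp [mulVec, dotProduct, blk, Fintype.sum_prod_type, Fintype.sum_sum_type, glue]

theorem dotProduct_blk_inr_mulVec (M : Matrix ((B ⊕ I) × Fin d) ((B ⊕ I) × Fin d) ℝ)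
    (u : I × Fin d → ℝ) :
    u ⬝ᵥ blk M Sum.inr Sum.inr *ᵥ u =
      glue (0 : B × Fin d → ℝ) u ⬝ᵥ M *ᵥ glue (0 : B × Fin d → ℝ) u := by
  simp [blk_inr_mulVec_apply, dotProduct, Fintype.sum_prod_type, Fintype.sum_sum_type, glue]

variable [DecidableEq B] [DecidableEq I] (x : (B ⊕ I) → Fin d → ℝ)

-- The energy `½ ∑ c_{ij} s_{ij}²` of the displacement `(0, u)` is `u ⬝ K_II u = 0`.
theorem bondStrain_glue_eq_zero_of_blk_mulVec_eq_zero {c : (B ⊕ I) → (B ⊕ I) → ℝ}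
    (hsymm : ∀ i j, c i j = c j i) (hpos : ∀ i j, 0 ≤ c i j) {u : I × Fin d → ℝ}
    (hu : blk (stiffness x c) Sum.inr Sum.inr *ᵥ u = 0) {i j : B ⊕ I} (hij : c i j ≠ 0) :
    bondStrain x (glue (0 : B × Fin d → ℝ) u) i j = 0 := by
  have henergy : ∑ i, ∑ j, c i j * bondStrain x (glue (0 : B × Fin d → ℝ) u) i j ^ 2 = 0 := by
    rw [← two_mul_dotProduct_stiffness_mulVec x c hsymm, ← dotProduct_blk_inr_mulVec, hu,
      dotProduct_zero, mul_zero]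
  have hterm := (Finset.sum_eq_zero_iff_of_nonneg fun j _ => mul_nonneg (hpos i j) (sq_nonneg _)).mp
    ((Finset.sum_eq_zero_iff_of_nonneg fun i _ => Finset.sum_nonneg fun j _ =>
      mul_nonneg (hpos i j) (sq_nonneg _)).mp henergy i (Finset.mem_univ i)) j (Finset.mem_univ j)
  exact pow_eq_zero_iff two_ne_zero |>.mp ((mul_eq_zero.mp hterm).resolve_left hij)

theorem blk_stiffness_mulVec_eq_zero_of_bondStrain {c : (B ⊕ I) → (B ⊕ I) → ℝ}
    {u : I × Fin d → ℝ}
    (h : ∀ i j, c i j ≠ 0 → bondStrain x (glue (0 : B × Fin d → ℝ) u) i j = 0) :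
    blk (stiffness x c) Sum.inr Sum.inr *ᵥ u = 0 := by
  ext ⟨i, a⟩
  rw [blk_inr_mulVec_apply, Pi.zero_apply, stiffness_mulVec_apply]
  refine Finset.sum_eq_zero fun j _ => ?_
  by_cases hc : c (Sum.inr i) j = 0
  · rw [hc, zero_mul, zero_mul]
  · rw [h _ _ hc, mul_zero]

theorem blk_stiffness_mulVec_eq_zero_of_support_subset {c c' : (B ⊕ I) → (B ⊕ I) → ℝ}
    (hsymm : ∀ i j, c' i j = c' j i) (hpos : ∀ i j, 0 ≤ c' i j)
    (hsupp : ∀ i j, c i j ≠ 0 → c' i j ≠ 0) {u : I × Fin d → ℝ}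
    (hu : blk (stiffness x c') Sum.inr Sum.inr *ᵥ u = 0) :
    blk (stiffness x c) Sum.inr Sum.inr *ᵥ u = 0 :=
  blk_stiffness_mulVec_eq_zero_of_bondStrain x fun _ _ hc =>
    bondStrain_glue_eq_zero_of_blk_mulVec_eq_zero x hsymm hpos hu (hsupp _ _ hc)

end Blocks

theorem eventually_nonneg_and_ne_zero_iff {a b : ℝ} (ha : 0 ≤ a) (hb : a = 0 → 0 ≤ b) :
    ∀ᶠ ε in 𝓝[>] 0, 0 ≤ a + ε * b ∧ (a + ε * b ≠ 0 ↔ a ≠ 0 ∨ b ≠ 0) := by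
  rcases ha.eq_or_lt with rfl | ha
  · filter_upwards [self_mem_nhdsWithin] with ε (hε : 0 < ε)
    simp [hε.ne', mul_nonneg hε.le (hb rfl)]
  · have hlim : Tendsto (fun ε => a + ε * b) (𝓝[>] 0) (𝓝 a) := by
      refine ((continuous_const.add (continuous_id.mul continuous_const)).tendsto' 0 a ?_).mono_left
        nhdsWithin_le_nhds
      simp
    filter_upwards [hlim.eventually_const_lt ha] with ε hε
    exact ⟨hε.le, iff_of_true hε.ne' (Or.inl ha.ne')⟩

theorem perturbed_kernel_stable_general {d : ℕ}
    {B I : Type*} [Fintype B] [Fintype I] [DecidableEq B] [DecidableEq I]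
    (x : (B ⊕ I) → Fin d → ℝ) (k l : (B ⊕ I) → (B ⊕ I) → ℝ)
    (hnet : IsSpringNetwork x k)
    (hlsymm : ∀ i j, l i j = l j i)
    (hlnew : ∀ i j, k i j = 0 → 0 ≤ l i j) :
    ∃ ε₀ : ℝ, 0 < ε₀ ∧ ∀ ε ε' : ℝ, 0 < ε → ε < ε₀ → 0 < ε' → ε' < ε₀ →
      (∀ u : I × Fin d → ℝ,
        blk (stiffness x k + ε • stiffness x l) Sum.inr Sum.inr *ᵥ u = 0 →
        blk (stiffness x k) Sum.inr Sum.inr *ᵥ u = 0) ∧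
      (∀ u : I × Fin d → ℝ,
        blk (stiffness x k + ε • stiffness x l) Sum.inr Sum.inr *ᵥ u = 0 ↔
        blk (stiffness x k + ε' • stiffness x l) Sum.inr Sum.inr *ᵥ u = 0) := by
  obtain ⟨-, hksymm, hkpos⟩ := hnet
  have hsmall : ∀ᶠ ε in 𝓝[>] (0 : ℝ), ∀ i j,
      0 ≤ (k + ε • l) i j ∧ ((k + ε • l) i j ≠ 0 ↔ k i j ≠ 0 ∨ l i j ≠ 0) := by
    simp only [eventually_all]
    exact fun i j => eventually_nonneg_and_ne_zero_iff (hkpos i j) (hlnew i j)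
  obtain ⟨ε₀, hε₀, hgood⟩ := (nhdsGT_basis (0 : ℝ)).eventually_iff.mp hsmall
  have hsymm (η : ℝ) (i j) : (k + η • l) i j = (k + η • l) j i := by
    simp only [Pi.add_apply, Pi.smul_apply, hksymm i j, hlsymm i j]
  refine ⟨ε₀, hε₀, fun ε ε' hε hεε₀ hε' hε'ε₀ => ?_⟩
  have hc := hgood ⟨hε, hεε₀⟩
  have hc' := hgood ⟨hε', hε'ε₀⟩
  simp only [← stiffness_smul, ← stiffness_add]
  refine ⟨fun u => ?_, fun u => ⟨?_, ?_⟩⟩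
  · exact blk_stiffness_mulVec_eq_zero_of_support_subset x (hsymm ε) (fun i j => (hc i j).1)
      fun i j hk => (hc i j).2.mpr (Or.inl hk)
  · exact blk_stiffness_mulVec_eq_zero_of_support_subset x (hsymm ε) (fun i j => (hc i j).1)
      fun i j h => (hc i j).2.mpr ((hc' i j).2.mp h)
  · exact blk_stiffness_mulVec_eq_zero_of_support_subset x (hsymm ε') (fun i j => (hc' i j).1)
      fun i j h => (hc' i j).2.mpr ((hc i j).2.mp h)

/-- for small enough `ε > 0`, the floppy modes of the perturbed
network `K + εE` are floppy modes of the unperturbed network, and the kernel of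
the perturbed interior block is independent of `ε`. -/
theorem perturbed_kernel_stable {d : ℕ} (hd : d = 2 ∨ d = 3)
    {B I : Type*} [Fintype B] [Fintype I] [DecidableEq B] [DecidableEq I]
    (x : (B ⊕ I) → Fin d → ℝ) (k l : (B ⊕ I) → (B ⊕ I) → ℝ)
    (hnet : IsSpringNetwork x k)
    (hlsymm : ∀ i j, l i j = l j i)
    (hlnew : ∀ i j, k i j = 0 → 0 ≤ l i j) :
    ∃ ε₀ : ℝ, 0 < ε₀ ∧ ∀ ε ε' : ℝ, 0 < ε → ε < ε₀ → 0 < ε' → ε' < ε₀ →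
      (∀ u : I × Fin d → ℝ,
        blk (stiffness x k + ε • stiffness x l) Sum.inr Sum.inr *ᵥ u = 0 →
        blk (stiffness x k) Sum.inr Sum.inr *ᵥ u = 0) ∧
      (∀ u : I × Fin d → ℝ,
        blk (stiffness x k + ε • stiffness x l) Sum.inr Sum.inr *ᵥ u = 0 ↔
        blk (stiffness x k + ε' • stiffness x l) Sum.inr Sum.inr *ᵥ u = 0) :=
  perturbed_kernel_stable_general x k l hnet hlsymm hlnew
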